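/- arXiv:0902.3093 — 4 statements merged into one kernel-verified Lean document; each statement's English description precedes it below -/
import Mathlib

section
/- Let X be a finite nonempty set of integers and B an infinite set of integers with B ∩ {n ∈ ℤ : n < 0} finite. Set η := min{|b−b'| : b, b' ∈ B, b ≠ b', |b−b'| ≥ diam(X)}. Then for all natural numbers u, v there exists a constant C such that for all m ∈ ℕ, (uB + vX)(m) ≤ η · ((u+v)B)(m) + C. -/
open Pointwise

/-- The `h`-fold sumset of a set `S` of integers. -/
def foldSum (h : ℕ) (S : Set ℤ) : Set ℤ :=
  {z : ℤ | ∃ f : Fin h → ℤ, (∀ i, f i ∈ S) ∧ ∑ i, f i = z}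

/-- The diameter of a finite set of integers: `max {|x - y| : x, y ∈ X}` (as a natural number). -/
def diamN (X : Finset ℤ) : ℕ :=
  (X ×ˢ X).sup fun p => (p.1 - p.2).natAbs

/-- `U(m)`: the number of elements of `U` not exceeding `m`. -/
noncomputable def countUpTo (U : Set ℤ) (m : ℕ) : ℕ :=
  {n : ℤ | n ∈ U ∧ n ≤ (m : ℤ)}.ncard

lemma foldSum_lower {S : Set ℤ} {L : ℤ} (hL : ∀ x ∈ S, L ≤ x) {n : ℕ} {z : ℤ}
    (hz : z ∈ foldSum n S) : (n : ℤ) * L ≤ z := by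
  obtain ⟨f, hf, rfl⟩ := hz
  calc (n : ℤ) * L = ∑ _i : Fin n, L := by simp [Finset.sum_const, mul_comm]
    _ ≤ ∑ i, f i := Finset.sum_le_sum fun i _ => hL _ (hf i)

lemma add_mem_foldSum {S : Set ℤ} {a b : ℕ} {z w : ℤ}
    (hz : z ∈ foldSum a S) (hw : w ∈ foldSum b S) : z + w ∈ foldSum (a + b) S := by
  obtain ⟨f, hf, rfl⟩ := hz
  obtain ⟨g, hg, rfl⟩ := hw
  refine ⟨Fin.append f g, fun i => ?_, ?_⟩
  · induction i using Fin.addCases with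
    | left i => simpa using hf i
    | right i => simpa using hg i
  · rw [Fin.sum_univ_add]
    simp

lemma const_mem_foldSum {S : Set ℤ} {x : ℤ} (hx : x ∈ S) (n : ℕ) :
    (n : ℤ) * x ∈ foldSum n S :=
  ⟨fun _ => x, fun _ => hx, by simp [Finset.sum_const, mul_comm]⟩

theorem counting_bound_for_uB_add_vX
    (X : Finset ℤ) (hXne : X.Nonempty)
    (B : Set ℤ) (hBinf : B.Infinite) (hBneg : {n : ℤ | n ∈ B ∧ n < 0}.Finite)
    (η : ℕ)
    (hη : η = sInf {e : ℕ | ∃ b ∈ B, ∃ b' ∈ B,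
        b ≠ b' ∧ (b - b').natAbs = e ∧ diamN X ≤ e})
    (u v : ℕ) :
    ∃ C : ℕ, ∀ m : ℕ,
      countUpTo (foldSum u B + foldSum v ↑X) m ≤ η * countUpTo (foldSum (u + v) B) m + C := by
  set D := diamN X with hDdef
  -- the defining set of η is nonempty
  have hSne : {e : ℕ | ∃ b ∈ B, ∃ b' ∈ B,
      b ≠ b' ∧ (b - b').natAbs = e ∧ diamN X ≤ e}.Nonempty := by
    obtain ⟨b₀, hb₀⟩ := hBinf.nonempty
    obtain ⟨b', hb'⟩ := (hBinf.diff (Set.finite_Icc (b₀ - D) (b₀ + D))).nonempty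
    obtain ⟨hb'B, hb'notin⟩ := hb'
    simp only [Set.mem_Icc, not_and, not_le] at hb'notin
    refine ⟨(b₀ - b').natAbs, b₀, hb₀, b', hb'B, ?_, rfl, ?_⟩ <;> omega
  have hηmem := Nat.sInf_mem hSne
  rw [← hη] at hηmem
  obtain ⟨b, hbB, b', hb'B, hne, habs, hDη⟩ := hηmem
  have hηpos : 0 < η := by omega
  -- obtain p ∈ B with p + η ∈ B
  obtain ⟨p, hpB, hpη⟩ : ∃ p, p ∈ B ∧ p + (η : ℤ) ∈ B := by
    rcases Int.natAbs_eq (b - b') with h | h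
    · refine ⟨b', hb'B, ?_⟩
      have : b' + (η : ℤ) = b := by omega
      rwa [this]
    · refine ⟨b, hbB, ?_⟩
      have : b + (η : ℤ) = b' := by omega
      rwa [this]
  -- lower bound for B
  obtain ⟨β, hβ⟩ : ∃ β : ℤ, ∀ x ∈ B, β ≤ x := by
    rcases Finset.eq_empty_or_nonempty hBneg.toFinset with h | h
    · refine ⟨0, fun x hx => ?_⟩
      by_contra hc
      have hmem : x ∈ hBneg.toFinset := by
        simp only [Set.Finite.mem_toFinset, Set.mem_setOf_eq]
        exact ⟨hx, by omega⟩
      simp [h] at hmem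
    · refine ⟨min 0 (hBneg.toFinset.min' h), fun x hx => ?_⟩
      by_cases h0 : x < 0
      · refine le_trans (min_le_right _ _) (Finset.min'_le _ _ ?_)
        simp only [Set.Finite.mem_toFinset, Set.mem_setOf_eq]
        exact ⟨hx, h0⟩
      · exact le_trans (min_le_left _ _) (by omega)
  -- bounds from X
  set c := X.min' hXne with hcdef
  have hcX : c ∈ X := X.min'_mem hXne
  have hc : ∀ x ∈ (↑X : Set ℤ), c ≤ x := fun x hx => X.min'_le x hx
  have hXd : ∀ x ∈ (↑X : Set ℤ), x ≤ c + D := by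
    intro x hx
    have h1 : (x - c).natAbs ≤ D := by
      have h2 := Finset.le_sup (f := fun p : ℤ × ℤ => (p.1 - p.2).natAbs)
        (b := (x, c)) (Finset.mem_product.mpr ⟨Finset.mem_coe.mp hx, hcX⟩)
      simpa [hDdef, diamN] using h2
    omega
  set k : ℤ := v * p - v * c with hkdef
  refine ⟨η * k.toNat, fun m => ?_⟩
  -- the key claim
  have key : ∀ z : ℤ, ∃ w : ℤ, (z ∈ foldSum u B + foldSum v ↑X ∧ z ≤ (m : ℤ)) →
      w ∈ foldSum (u + v) B ∧ w ≤ (m : ℤ) + k ∧ w ≤ z + k ∧ z + k < w + η := by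
    intro z
    by_cases hz : z ∈ foldSum u B + foldSum v ↑X ∧ z ≤ (m : ℤ)
    swap
    · exact ⟨0, fun h => absurd h hz⟩
    obtain ⟨hz1, hzm⟩ := hz
    rw [Set.mem_add] at hz1
    obtain ⟨s, hs, t, ht, hst⟩ := hz1
    have ht1 : (v : ℤ) * c ≤ t := foldSum_lower hc ht
    have ht2 : t ≤ (v : ℤ) * c + (v : ℤ) * D := by
      obtain ⟨g, hgX, hgt⟩ := ht
      calc t = ∑ i, g i := hgt.symm
        _ ≤ ∑ _i : Fin v, (c + D) := Finset.sum_le_sum fun i _ => hXd _ (hgX i)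
        _ = (v : ℤ) * c + (v : ℤ) * D := by
            simp [Finset.sum_const, mul_add, mul_comm]
    set q : ℤ := (t - v * c) / η with hqdef
    set r : ℤ := (t - v * c) % η with hrdef
    have hηne : (η : ℤ) ≠ 0 := by exact_mod_cast hηpos.ne'
    have hdiv : (η : ℤ) * q + r = t - v * c := Int.mul_ediv_add_emod _ _
    have hr0 : 0 ≤ r := Int.emod_nonneg _ hηne
    have hrη : r < η := Int.emod_lt_of_pos _ (by exact_mod_cast hηpos)
    have hq0 : 0 ≤ q := Int.ediv_nonneg (by omega) (by positivity)
    have hvD : (v : ℤ) * D ≤ (v : ℤ) * η := by exact_mod_cast Nat.mul_le_mul_left v hDη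
    have hqv : q ≤ v := by
      have h1 : t - v * c ≤ (v : ℤ) * η := by linarith
      have h2 : (t - v * c) / (η : ℤ) ≤ ((v : ℤ) * η) / (η : ℤ) :=
        Int.ediv_le_ediv (by exact_mod_cast hηpos) h1
      have h3 : ((v : ℤ) * η) / η = v := Int.mul_ediv_cancel _ hηne
      rw [h3] at h2
      exact h2
    set q' : ℕ := q.toNat with hq'def
    have hq'c : (q' : ℤ) = q := Int.toNat_of_nonneg hq0
    have hvq'c : ((v - q' : ℕ) : ℤ) = (v : ℤ) - q := by omega
    have hw1 : (q' : ℤ) * (p + η) ∈ foldSum q' B := const_mem_foldSum hpη q'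
    have hw2 : ((v - q' : ℕ) : ℤ) * p ∈ foldSum (v - q') B := const_mem_foldSum hpB _
    have hw : s + ((q' : ℤ) * (p + η) + ((v - q' : ℕ) : ℤ) * p)
        ∈ foldSum (u + (q' + (v - q'))) B :=
      add_mem_foldSum hs (add_mem_foldSum hw1 hw2)
    have heq : u + (q' + (v - q')) = u + v := by omega
    rw [heq] at hw
    have hwz : z + k - r = s + ((q' : ℤ) * (p + η) + ((v - q' : ℕ) : ℤ) * p) := by
      rw [hq'c, hvq'c, ← hst, hkdef]
      linear_combination -hdiv
    refine ⟨z + k - r, fun _ => ⟨?_, by linarith, by linarith, by linarith⟩⟩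
    rw [hwz]
    exact hw
  choose f hf using key
  -- finite truncations
  set Tset : Set ℤ := {n : ℤ | n ∈ foldSum u B + foldSum v ↑X ∧ n ≤ (m : ℤ)} with hTdef
  have hTfin : Tset.Finite := by
    apply (Set.finite_Icc ((u : ℤ) * β + (v : ℤ) * c) m).subset
    rintro z ⟨hz1, hzm⟩
    rw [Set.mem_add] at hz1
    obtain ⟨s, hs, t, ht, hst⟩ := hz1
    have h1 := foldSum_lower hβ hs
    have h2 := foldSum_lower hc ht
    simp only [Set.mem_Icc]
    omega
  set Aset : Set ℤ := {n : ℤ | n ∈ foldSum (u + v) B ∧ n ≤ (m : ℤ)} with hAdef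
  have hAfin : Aset.Finite := by
    apply (Set.finite_Icc (((u + v : ℕ) : ℤ) * β) m).subset
    rintro z ⟨hz1, hzm⟩
    have h1 := foldSum_lower hβ hz1
    simp only [Set.mem_Icc]
    omega
  have hLHS : countUpTo (foldSum u B + foldSum v ↑X) m = hTfin.toFinset.card :=
    Set.ncard_eq_toFinset_card _ hTfin
  have hRHS : countUpTo (foldSum (u + v) B) m = hAfin.toFinset.card :=
    Set.ncard_eq_toFinset_card _ hAfin
  rw [hLHS, hRHS]
  set T : Finset ℤ := hTfin.toFinset with hTF
  set A : Finset ℤ := hAfin.toFinset with hAF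
  have hmemT : ∀ z ∈ T, z ∈ foldSum u B + foldSum v ↑X ∧ z ≤ (m : ℤ) := by
    intro z hz
    rwa [hTF, Set.Finite.mem_toFinset] at hz
  -- fiber bound
  have hcard1 : T.card ≤ η * (T.image f).card := by
    apply Finset.card_le_mul_card_image
    intro a _
    have hsub : T.filter (fun z => f z = a) ⊆ Finset.Ico (a - k) (a - k + η) := by
      intro z hz
      rw [Finset.mem_filter] at hz
      obtain ⟨hzT, hfz⟩ := hz
      obtain ⟨_, _, h3, h4⟩ := hf z (hmemT z hzT)
      rw [hfz] at h3 h4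
      rw [Finset.mem_Ico]
      omega
    calc (T.filter (fun z => f z = a)).card ≤ (Finset.Ico (a - k) (a - k + η)).card :=
          Finset.card_le_card hsub
      _ = η := by rw [Int.card_Ico]; omega
  -- image lands in elements of (u+v)B that are ≤ m + k
  have hcard2 : (T.image f).card ≤ A.card + k.toNat := by
    have hsub : T.image f ⊆ A ∪ Finset.Ioc (m : ℤ) ((m : ℤ) + k.toNat) := by
      intro w hw
      rw [Finset.mem_image] at hw
      obtain ⟨z, hzT, rfl⟩ := hw
      obtain ⟨h1, h2, _, _⟩ := hf z (hmemT z hzT)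
      rw [Finset.mem_union]
      by_cases hle : f z ≤ (m : ℤ)
      · left
        rw [hAF, Set.Finite.mem_toFinset]
        exact ⟨h1, hle⟩
      · right
        rw [Finset.mem_Ioc]
        omega
    calc (T.image f).card ≤ (A ∪ Finset.Ioc (m : ℤ) ((m : ℤ) + k.toNat)).card :=
          Finset.card_le_card hsub
      _ ≤ A.card + (Finset.Ioc (m : ℤ) ((m : ℤ) + k.toNat)).card := Finset.card_union_le _ _
      _ = A.card + k.toNat := by rw [Int.card_Ioc]; omega
  calc T.card ≤ η * (T.image f).card := hcard1
    _ ≤ η * (A.card + k.toNat) := Nat.mul_le_mul_left η hcard2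
    _ = η * A.card + η * k.toNat := Nat.mul_add η _ _
end

section
/- Let G be a finite abelian group and B a nonempty subset of G. For r ∈ ℕ set u_r := |rB|, where rB is the r-fold sumset of B (and 0B = {0}). Then there exists r₀ ∈ ℕ such that u_0 < u_1 < ⋯ < u_{r₀} and u_r = u_{r₀} for all r ≥ r₀. -/
/-- The `r`-fold sumset of a subset `B` of an additive commutative monoid,
with the convention that the `0`-fold sumset is `{0}`. -/
def foldSumG {G : Type*} [AddCommMonoid G] (r : ℕ) (B : Set G) : Set G :=
  {z : G | ∃ f : Fin r → G, (∀ i, f i ∈ B) ∧ ∑ i, f i = z}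

/-!
Since `(r+1)B = B + rB ⊇ b + rB` for every `b ∈ B`, the sizes `|rB|` are non-decreasing and
bounded by `|G|`, so they cannot increase forever. Once `|(r+1)B| = |rB|`, the inclusion
`b + rB ⊆ (r+1)B` is an equality, hence `(r+2)B = B + b + rB = b + (r+1)B` has the same size
as `(r+1)B`: the first repetition of the sequence is followed by repetitions only.
-/

open Pointwise

theorem Nat.exists_strictly_increasing_then_constant {u : ℕ → ℕ} {N : ℕ} (hmono : Monotone u)
    (hbdd : ∀ r, u r ≤ N) (hstable : ∀ r, u (r + 1) = u r → u (r + 2) = u (r + 1)) :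
    ∃ r₀, (∀ r < r₀, u r < u (r + 1)) ∧ ∀ r ≥ r₀, u r = u r₀ := by
  classical
  have hrepeat : ∃ r, u (r + 1) = u r := by
    by_contra! hne
    have hstrict : StrictMono u :=
      strictMono_nat_of_lt_succ fun r => (hmono r.le_succ).lt_of_ne (hne r).symm
    have hgrowth : N + 1 ≤ u (N + 1) := hstrict.id_le (N + 1)
    exact absurd (hgrowth.trans (hbdd (N + 1))) (by omega)
  set r₀ := Nat.find hrepeat
  have hconst : ∀ r ≥ r₀, u (r + 1) = u r := fun r hr => by
    induction r, hr using Nat.le_induction with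
    | base => exact Nat.find_spec hrepeat
    | succ n _ ih => exact hstable n ih
  refine ⟨r₀, fun r hr => (hmono r.le_succ).lt_of_ne fun h => Nat.find_min hrepeat hr h.symm,
    fun r hr => ?_⟩
  induction r, hr using Nat.le_induction with
  | base => rfl
  | succ n hn ih => rw [hconst n hn, ih]

section foldSumG

variable {G : Type*}

theorem foldSumG_succ [AddCommMonoid G] (r : ℕ) (B : Set G) :
    foldSumG (r + 1) B = B + foldSumG r B := by
  ext z
  constructor
  · rintro ⟨f, hf, rfl⟩
    exact ⟨f 0, hf 0, ∑ i : Fin r, f i.succ, ⟨fun i => f i.succ, fun i => hf _, rfl⟩,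
      (Fin.sum_univ_succ f).symm⟩
  · rintro ⟨b, hb, y, ⟨g, hg, rfl⟩, rfl⟩
    exact ⟨Fin.cons b g, fun i => Fin.cases hb hg i, Fin.sum_cons b g⟩

theorem vadd_foldSumG_subset_succ [AddCommMonoid G] {B : Set G} {b : G} (hb : b ∈ B) (r : ℕ) :
    b +ᵥ foldSumG r B ⊆ foldSumG (r + 1) B :=
  foldSumG_succ r B ▸ Set.vadd_set_subset_vadd hb

variable [AddCommGroup G] [Finite G] {B : Set G} {b : G}

theorem ncard_foldSumG_le_succ (hb : b ∈ B) (r : ℕ) :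
    (foldSumG r B).ncard ≤ (foldSumG (r + 1) B).ncard := by
  rw [← Set.ncard_vadd_set b]
  exact Set.ncard_le_ncard (vadd_foldSumG_subset_succ hb r)

theorem ncard_foldSumG_succ_succ_eq (hb : b ∈ B) {r : ℕ}
    (h : (foldSumG (r + 1) B).ncard = (foldSumG r B).ncard) :
    (foldSumG (r + 2) B).ncard = (foldSumG (r + 1) B).ncard := by
  have hshift : foldSumG (r + 1) B = b +ᵥ foldSumG r B :=
    (Set.eq_of_subset_of_ncard_le (vadd_foldSumG_subset_succ hb r)
      (by rw [Set.ncard_vadd_set, h])).symm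
  have hshift_succ : foldSumG (r + 2) B = b +ᵥ foldSumG (r + 1) B := by
    rw [foldSumG_succ (r + 1)]
    conv_lhs => rw [hshift]
    rw [add_vadd_comm, ← foldSumG_succ]
  rw [hshift_succ, Set.ncard_vadd_set]

end foldSumG

theorem card_foldSum_increases_then_stabilizes
    {G : Type*} [AddCommGroup G] [Fintype G] (B : Set G) (hB : B.Nonempty) :
    ∃ r₀ : ℕ,
      (∀ r < r₀, (foldSumG r B).ncard < (foldSumG (r + 1) B).ncard) ∧
      (∀ r ≥ r₀, (foldSumG r B).ncard = (foldSumG r₀ B).ncard) := by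
  obtain ⟨b, hb⟩ := hB
  exact Nat.exists_strictly_increasing_then_constant
    (monotone_nat_of_le_succ (ncard_foldSumG_le_succ hb)) (fun r => Set.ncard_le_card _)
    (fun _ => ncard_foldSumG_succ_succ_eq hb)
end

section
/- Let A be an additive basis of order h and X a finite nonempty subset of A such that B := A \ X is infinite. Then the lower asymptotic density of the h-fold sumset hB is strictly positive: d̲(hB) > 0. -/
open Pointwise

/-- Every sufficiently large integer is a sum of `h` elements of `A`. -/
def RepBy (A : Set ℤ) (h : ℕ) : Prop :=
  ∀ᶠ N : ℤ in Filter.atTop, N ∈ foldSum h A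

/-- `A ⊆ ℤ` is an additive basis: it has only finitely many negative elements and
there is `h ≥ 1` such that every sufficiently large positive integer is a
sum of `h` elements of `A`. -/
def IsAdditiveBasis (A : Set ℤ) : Prop :=
  {n : ℤ | n ∈ A ∧ n < 0}.Finite ∧ ∃ h : ℕ, 1 ≤ h ∧ RepBy A h

/-- The order `G(A)` of an additive basis: the least `h ≥ 1` such that every
sufficiently large positive integer is a sum of `h` elements of `A`. -/
noncomputable def basisOrder (A : Set ℤ) : ℕ :=
  sInf {h : ℕ | 1 ≤ h ∧ RepBy A h}

/-- `δ(X) := gcd {x - y : x, y ∈ X}`, with the convention `δ(X) = 1` when `|X| = 1`. -/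
def deltaN (X : Finset ℤ) : ℕ :=
  if 2 ≤ X.card then (X ×ˢ X).gcd (fun p => (p.1 - p.2).natAbs) else 1

/-- The lower asymptotic density `d̲(U) = liminf_{m → ∞} U(m)/m`. -/
noncomputable def lowerDensity (U : Set ℤ) : ℝ :=
  Filter.liminf (fun m : ℕ => (countUpTo U m : ℝ) / (m : ℝ)) Filter.atTop

theorem lowerDensity_hfold_pos
    (A : Set ℤ) (h : ℕ) (hA : IsAdditiveBasis A) (hordA : basisOrder A = h)
    (X : Finset ℤ) (hXne : X.Nonempty) (hXA : ↑X ⊆ A)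
    (hBinf : (A \ ↑X).Infinite) :
    0 < lowerDensity (foldSum h (A \ ↑X)) := by
  classical
  set B : Set ℤ := A \ ↑X with hBdef
  obtain ⟨b₀, hb₀⟩ := hBinf.nonempty
  -- h satisfies RepBy A h
  have hne : {h' : ℕ | 1 ≤ h' ∧ RepBy A h'}.Nonempty := hA.2
  have hmem : h ∈ {h' : ℕ | 1 ≤ h' ∧ RepBy A h'} := hordA ▸ Nat.sInf_mem hne
  obtain ⟨h1, hrep⟩ := hmem
  obtain ⟨N₀, hN₀⟩ := Filter.eventually_atTop.mp hrep
  set C₀ : ℤ := X.sup' hXne fun x => |b₀ - x| with hC₀def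
  have hC₀0 : 0 ≤ C₀ := by
    obtain ⟨x, hx⟩ := hXne
    exact le_trans (abs_nonneg _) (Finset.le_sup' (fun x => |b₀ - x|) hx)
  set C : ℤ := (h : ℤ) * C₀ with hCdef
  have hC0 : 0 ≤ C := mul_nonneg (by positivity) hC₀0
  -- key translation lemma
  have key : ∀ N : ℤ, ∃ t : ℤ, N₀ ≤ N → (|t| ≤ C ∧ N + t ∈ foldSum h B) := by
    intro N
    by_cases hN : N₀ ≤ N
    · obtain ⟨f, hf, hsum⟩ := hN₀ N hN
      set g : Fin h → ℤ := fun i => if f i ∈ X then b₀ else f i with hgdef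
      have hgB : ∀ i, g i ∈ B := by
        intro i
        by_cases hx : f i ∈ X
        · simpa [hgdef, hx] using hb₀
        · simp only [hgdef, hx, if_false]
          exact ⟨hf i, by simpa using hx⟩
      refine ⟨(∑ i, g i) - N, fun _ => ⟨?_, ⟨g, hgB, by ring⟩⟩⟩
      · have heq : (∑ i, g i) - N = ∑ i : Fin h, (g i - f i) := by
          rw [Finset.sum_sub_distrib, hsum]
        rw [heq]
        calc |∑ i : Fin h, (g i - f i)| ≤ ∑ i : Fin h, |g i - f i| :=
              Finset.abs_sum_le_sum_abs _ _
          _ ≤ ∑ _i : Fin h, C₀ := by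
              refine Finset.sum_le_sum fun i _ => ?_
              by_cases hx : f i ∈ X
              · simp only [hgdef, hx, if_true]
                exact Finset.le_sup' (fun x => |b₀ - x|) hx
              · simp [hgdef, hx, hC₀0]
          _ = C := by simp [hCdef, mul_comm]
    · exact ⟨0, fun hN' => absurd hN' hN⟩
  choose τ hτ using key
  -- lower bound for elements of foldSum h B
  obtain ⟨lb, hlb⟩ := hA.1.bddBelow
  set L₀ : ℤ := min lb 0 with hL₀def
  have hBlb : ∀ b ∈ B, L₀ ≤ b := by
    intro b hb
    rcases lt_or_ge b 0 with h' | h'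
    · exact le_trans (min_le_left _ _) (hlb ⟨hb.1, h'⟩)
    · exact le_trans (min_le_right _ _) h'
  have hL₀0 : L₀ ≤ 0 := min_le_right _ _
  set L : ℤ := (h : ℤ) * L₀ with hLdef
  have hsum_lb : ∀ z ∈ foldSum h B, L ≤ z := by
    rintro z ⟨f, hf, rfl⟩
    calc L = ∑ _i : Fin h, L₀ := by simp [hLdef, mul_comm]
      _ ≤ ∑ i, f i := Finset.sum_le_sum fun i _ => hBlb _ (hf i)
  have hfinU : ∀ m : ℤ, {n : ℤ | n ∈ foldSum h B ∧ n ≤ m}.Finite := fun m =>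
    (Set.finite_Icc L m).subset fun n hn => ⟨hsum_lb n hn.1, hn.2⟩
  -- counting lower bound
  have hcount : ∀ m : ℕ, N₀ + C ≤ (m : ℤ) →
      (m : ℤ) - C - N₀ + 1 ≤ (2 * C + 1) * (countUpTo (foldSum h B) m : ℤ) := by
    intro m hm
    set φ : ℤ → ℤ := fun N => N + τ N with hφdef
    set s : Finset ℤ := Finset.Icc N₀ ((m : ℤ) - C) with hsdef
    have hmaps : ∀ N ∈ s, φ N ∈ {n : ℤ | n ∈ foldSum h B ∧ n ≤ (m : ℤ)} := by
      intro N hN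
      rw [hsdef, Finset.mem_Icc] at hN
      obtain ⟨ht, hmem'⟩ := hτ N hN.1
      have h1 : τ N ≤ C := le_trans (le_abs_self _) ht
      exact ⟨hmem', by simp only [hφdef]; omega⟩
    have hfiber : ∀ v ∈ s.image φ, (s.filter fun N => φ N = v).card ≤ (2 * C + 1).toNat := by
      intro v _
      have hsub : (s.filter fun N => φ N = v) ⊆ Finset.Icc (v - C) (v + C) := by
        intro N hN
        rw [Finset.mem_filter] at hN
        obtain ⟨hNs, hNv⟩ := hN
        rw [hsdef, Finset.mem_Icc] at hNs
        obtain ⟨ht, _⟩ := hτ N hNs.1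
        rw [abs_le] at ht
        have : N + τ N = v := hNv
        rw [Finset.mem_Icc]
        omega
      calc (s.filter fun N => φ N = v).card ≤ (Finset.Icc (v - C) (v + C)).card :=
            Finset.card_le_card hsub
        _ = (2 * C + 1).toNat := by rw [Int.card_Icc]; congr 1; ring
    have h1 : s.card ≤ (2 * C + 1).toNat * (s.image φ).card :=
      Finset.card_le_mul_card_image _ _ hfiber
    have h2 : (s.image φ).card ≤ countUpTo (foldSum h B) m := by
      have hsub : ↑(s.image φ) ⊆ {n : ℤ | n ∈ foldSum h B ∧ n ≤ (m : ℤ)} := by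
        intro n hn
        rw [Finset.coe_image] at hn
        obtain ⟨N, hN, rfl⟩ := hn
        exact hmaps N hN
      calc (s.image φ).card = (↑(s.image φ) : Set ℤ).ncard := (Set.ncard_coe_finset _).symm
        _ ≤ _ := Set.ncard_le_ncard hsub (hfinU _)
    have h3 : s.card = ((m : ℤ) - C - N₀ + 1).toNat := by
      rw [hsdef, Int.card_Icc]; congr 1; ring
    have h4 := le_trans h1 (Nat.mul_le_mul_left _ h2)
    rw [h3] at h4
    have h5 : (((m : ℤ) - C - N₀ + 1).toNat : ℤ) ≤
        (((2 * C + 1).toNat * countUpTo (foldSum h B) m : ℕ) : ℤ) := by exact_mod_cast h4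
    push_cast at h5
    rw [Int.toNat_of_nonneg (by omega : (0:ℤ) ≤ (m : ℤ) - C - N₀ + 1),
      Int.toNat_of_nonneg (by omega : (0:ℤ) ≤ 2 * C + 1)] at h5
    exact h5
  -- counting upper bound
  have hupper : ∀ m : ℕ, (countUpTo (foldSum h B) m : ℤ) ≤ (m : ℤ) + 1 - L := by
    intro m
    have hsub : {n : ℤ | n ∈ foldSum h B ∧ n ≤ (m : ℤ)} ⊆ Set.Icc L (m : ℤ) :=
      fun n hn => ⟨hsum_lb n hn.1, hn.2⟩
    have h1 : countUpTo (foldSum h B) m ≤ (Set.Icc L (m : ℤ)).ncard :=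
      Set.ncard_le_ncard hsub (Set.finite_Icc _ _)
    have h2 : (Set.Icc L (m : ℤ)).ncard = ((m : ℤ) + 1 - L).toNat := by
      rw [← Finset.coe_Icc, Set.ncard_coe_finset, Int.card_Icc]
    rw [h2] at h1
    have hL0 : L ≤ 0 := mul_nonpos_of_nonneg_of_nonpos (by positivity) hL₀0
    omega
  -- conclude
  set c : ℝ := 1 / (2 * (2 * (C : ℝ) + 1)) with hcdef
  have hK : (0 : ℝ) < 2 * (C : ℝ) + 1 := by
    have : (0 : ℝ) ≤ (C : ℝ) := by exact_mod_cast hC0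
    linarith
  have hc : 0 < c := by rw [hcdef]; positivity
  have hev : ∀ᶠ m : ℕ in Filter.atTop,
      c ≤ (countUpTo (foldSum h B) m : ℝ) / (m : ℝ) := by
    have hT : ∃ T : ℕ, (T : ℤ) ≥ 2 * (max N₀ 0 + C + 1) :=
      ⟨(2 * (max N₀ 0 + C + 1)).toNat, by omega⟩
    obtain ⟨T, hT⟩ := hT
    filter_upwards [Filter.eventually_ge_atTop T] with m hm
    have hmZ : (T : ℤ) ≤ (m : ℤ) := by exact_mod_cast hm
    have hm1 : N₀ + C ≤ (m : ℤ) := by omega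
    have hcnt := hcount m hm1
    have hm0 : (0 : ℝ) < (m : ℝ) := by
      have : (1 : ℤ) ≤ (m : ℤ) := by omega
      exact_mod_cast lt_of_lt_of_le zero_lt_one (by exact_mod_cast this)
    have hcntR : (m : ℝ) - (C : ℝ) - (N₀ : ℝ) + 1 ≤
        (2 * (C : ℝ) + 1) * (countUpTo (foldSum h B) m : ℝ) := by exact_mod_cast hcnt
    have hhalf : (m : ℝ) / 2 ≤ (m : ℝ) - (C : ℝ) - (N₀ : ℝ) + 1 := by
      have h2 : 2 * ((C : ℤ) + N₀ - 1) ≤ (m : ℤ) := by omega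
      have h2R : 2 * ((C : ℝ) + (N₀ : ℝ) - 1) ≤ (m : ℝ) := by exact_mod_cast h2
      linarith
    rw [hcdef, le_div_iff₀ hm0, div_mul_eq_mul_div, one_mul, div_le_iff₀ (by linarith : (0:ℝ) < 2 * (2 * (C:ℝ) + 1))]
    nlinarith [hcntR, hhalf, hm0.le]
  have hbdd : Filter.IsBoundedUnder (· ≤ ·) Filter.atTop
      (fun m : ℕ => (countUpTo (foldSum h B) m : ℝ) / (m : ℝ)) := by
    refine ⟨(1 : ℝ) + (1 - (L : ℝ)), ?_⟩
    rw [Filter.eventually_map]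
    filter_upwards [Filter.eventually_ge_atTop 1] with m hm
    have hm0 : (0 : ℝ) < (m : ℝ) := by exact_mod_cast Nat.lt_of_lt_of_le Nat.zero_lt_one hm
    have hL0 : L ≤ 0 := mul_nonpos_of_nonneg_of_nonpos (by positivity) hL₀0
    have h1 : (countUpTo (foldSum h B) m : ℝ) ≤ (m : ℝ) + 1 - (L : ℝ) := by
      exact_mod_cast hupper m
    rw [div_le_iff₀ hm0]
    have hm1 : (1 : ℝ) ≤ (m : ℝ) := by exact_mod_cast hm
    have hL0R : (L : ℝ) ≤ 0 := by exact_mod_cast hL0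
    nlinarith
  have hlim : c ≤ lowerDensity (foldSum h B) := by
    refine Filter.le_liminf_of_le (hbdd.isCoboundedUnder_ge) hev
  exact lt_of_lt_of_le hc hlim
end

section
/- Let A be an additive basis of order h and X a finite nonempty subset of A all of whose elements are nonnegative, and suppose 0 ∈ A \ X. Set μ := diam(X ∪ {0}). Then (A \ X) ∪ {1} is an additive basis of order at most hμ. -/
open Pointwise

/-!
Every element of `X` lies in `[0, μ]`, so it is a sum of `μ` elements of `B := (A \ X) ∪ {1}`
(ones padded by zeros), while every other element of `A` already lies in `B`. Hence
`A ⊆ μ • B`, and a representation of `N` by `h` elements of `A` becomes one by `h * μ`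
elements of `B`.
-/

theorem foldSum_eq_nsmul (h : ℕ) (S : Set ℤ) : foldSum h S = h • S := by
  ext z
  exact Set.mem_nsmul_iff_sum.symm

theorem RepBy.of_subset_nsmul {A B : Set ℤ} {h μ : ℕ} (hA : RepBy A h) (hAB : A ⊆ μ • B) :
    RepBy B (h * μ) :=
  hA.mono fun N hN => by
    rw [foldSum_eq_nsmul] at hN ⊢
    rw [mul_nsmul']
    exact Set.nsmul_subset_nsmul_left hAB hN

theorem IsAdditiveBasis.repBy_basisOrder {A : Set ℤ} (hA : IsAdditiveBasis A) :
    1 ≤ basisOrder A ∧ RepBy A (basisOrder A) :=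
  Nat.sInf_mem hA.2

theorem basisOrder_le_of_repBy {A : Set ℤ} {h : ℕ} (hh : 1 ≤ h) (hA : RepBy A h) :
    basisOrder A ≤ h :=
  Nat.sInf_le ⟨hh, hA⟩

theorem natAbs_sub_le_diamN {X : Finset ℤ} {x y : ℤ} (hx : x ∈ X) (hy : y ∈ X) :
    (x - y).natAbs ≤ diamN X :=
  Finset.le_sup (f := fun p : ℤ × ℤ => (p.1 - p.2).natAbs) (b := (x, y))
    (Finset.mem_product.2 ⟨hx, hy⟩)

theorem le_diamN_insert_zero {X : Finset ℤ} {x : ℤ} (hx : x ∈ X) :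
    x ≤ diamN (insert 0 X) := by
  have := natAbs_sub_le_diamN (Finset.mem_insert_of_mem hx) (Finset.mem_insert_self 0 X)
  rw [sub_zero] at this
  exact Int.le_natAbs.trans (by exact_mod_cast this)

theorem Icc_subset_nsmul {S : Set ℤ} (h0 : 0 ∈ S) (h1 : 1 ∈ S) (μ : ℕ) :
    Set.Icc 0 (μ : ℤ) ⊆ μ • S := by
  rintro z ⟨hz0, hzμ⟩
  lift z to ℕ using hz0
  have hz : (z : ℤ) ∈ z • S := by simpa using Set.nsmul_mem_nsmul (n := z) h1
  exact Set.nsmul_subset_nsmul_right h0 (by omega) hz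

theorem subset_nsmul_diff_union_one {A X : Set ℤ} {μ : ℕ} (hμ : μ ≠ 0) (h0 : 0 ∈ A \ X)
    (hX : X ⊆ Set.Icc 0 (μ : ℤ)) : A ⊆ μ • ((A \ X) ∪ {1}) := by
  intro a ha
  by_cases haX : a ∈ X
  · exact Icc_subset_nsmul (Or.inl h0) (Or.inr rfl) μ (hX haX)
  · exact Set.subset_nsmul (s := (A \ X) ∪ {1}) (Or.inl h0) hμ (Or.inl ⟨ha, haX⟩)

theorem basis_of_remove_nonneg_X_add_one_general
    (A : Set ℤ) (h : ℕ) (hA : IsAdditiveBasis A) (hordA : basisOrder A = h)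
    (X : Finset ℤ) (hXne : X.Nonempty)
    (hXnonneg : ∀ x ∈ X, (0 : ℤ) ≤ x)
    (h0 : (0 : ℤ) ∈ A \ ↑X)
    (μ : ℕ) (hμ : μ = diamN (insert 0 X)) :
    IsAdditiveBasis ((A \ ↑X) ∪ {1}) ∧ basisOrder ((A \ ↑X) ∪ {1}) ≤ h * μ := by
  obtain ⟨hh, hrep⟩ := hordA ▸ hA.repBy_basisOrder
  have hX : (X : Set ℤ) ⊆ Set.Icc 0 (μ : ℤ) := fun x hx =>
    ⟨hXnonneg x hx, hμ ▸ le_diamN_insert_zero hx⟩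
  have hμ0 : μ ≠ 0 := by
    obtain ⟨x, hx⟩ := hXne
    have hx0 : x ≠ 0 := fun e => h0.2 (e ▸ hx)
    have := hX hx
    simp only [Set.mem_Icc] at this
    omega
  have hrepB := hrep.of_subset_nsmul (subset_nsmul_diff_union_one hμ0 h0 hX)
  have hhμ : 1 ≤ h * μ := Nat.one_le_iff_ne_zero.mpr (Nat.mul_ne_zero (by omega) hμ0)
  have hneg : {n | n ∈ (A \ ↑X) ∪ {1} ∧ n < 0}.Finite :=
    hA.1.subset fun n ⟨hn, hneg⟩ => by
      rcases hn with ⟨hnA, -⟩ | rfl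
      exacts [⟨hnA, hneg⟩, absurd hneg (by norm_num)]
  exact ⟨⟨hneg, h * μ, hhμ, hrepB⟩, basisOrder_le_of_repBy hhμ hrepB⟩

theorem basis_of_remove_nonneg_X_add_one
    (A : Set ℤ) (h : ℕ) (hA : IsAdditiveBasis A) (hordA : basisOrder A = h)
    (X : Finset ℤ) (hXne : X.Nonempty) (hXA : ↑X ⊆ A)
    (hXnonneg : ∀ x ∈ X, (0 : ℤ) ≤ x)
    (h0 : (0 : ℤ) ∈ A \ ↑X)
    (μ : ℕ) (hμ : μ = diamN (insert 0 X)) :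
    IsAdditiveBasis ((A \ ↑X) ∪ {1}) ∧ basisOrder ((A \ ↑X) ∪ {1}) ≤ h * μ :=
  basis_of_remove_nonneg_X_add_one_general A h hA hordA X hXne hXnonneg h0 μ hμ
end
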